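/- arXiv:1809.07288 — 4 statements merged into one kernel-verified Lean document; each statement's English description precedes it below -/
import Mathlib

section
/- If a non-empty set-valued map X : ℝ ⇉ ℝⁿ is forward Lipschitz continuous at t with constant L > 0, then for every x ∈ X(t) the temporal tangent cone T^t_x X is non-empty; moreover, T^t_x X contains a vector of norm at most L. -/
open Filter Topology Metric Set Pointwise

/-- Temporal tangent cone of a set-valued map. -/
def temporalTangentCone {n : ℕ} (X : ℝ → Set (EuclideanSpace ℝ (Fin n)))
    (t : ℝ) (x : EuclideanSpace ℝ (Fin n)) : Set (EuclideanSpace ℝ (Fin n)) :=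
  {v | ∃ (xk : ℕ → EuclideanSpace ℝ (Fin n)) (δk : ℕ → ℝ),
    (∀ k, 0 < δk k) ∧ Tendsto δk atTop (𝓝 0) ∧ Tendsto xk atTop (𝓝 x) ∧
    (∀ k, xk k ∈ X (t + δk k)) ∧
    Tendsto (fun k => (δk k)⁻¹ • (xk k - x)) atTop (𝓝 v)}

/-- Forward Lipschitz continuity of `X` at time `t` with constant `L`. -/
def forwardLipschitzAt {n : ℕ} (X : ℝ → Set (EuclideanSpace ℝ (Fin n)))
    (t : ℝ) (L : ℝ) : Prop :=
  ∃ D > 0, ∀ δ, 0 ≤ δ → δ < D →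
    X t ⊆ X (t + δ) + (δ * L) • Metric.closedBall (0 : EuclideanSpace ℝ (Fin n)) 1

/-
Forward Lipschitz continuity gives, for a sequence `δₖ ↓ 0`, points `yₖ ∈ X(t + δₖ)` with
`‖yₖ - x‖ ≤ δₖ L`. The difference quotients `(yₖ - x) / δₖ` then lie in the closed ball of
radius `L`, which is compact, so a subsequence converges; its limit lies in `T^t_x X`.
-/

theorem exists_norm_sub_le_of_mem_add_smul_unitClosedBall {E : Type*}
    [NormedAddCommGroup E] [NormedSpace ℝ E] {A : Set E} {r : ℝ} (hr : 0 ≤ r) {x : E}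
    (hx : x ∈ A + r • closedBall (0 : E) 1) : ∃ a ∈ A, ‖a - x‖ ≤ r := by
  rw [smul_unitClosedBall_of_nonneg hr] at hx
  obtain ⟨a, ha, b, hb, rfl⟩ := hx
  refine ⟨a, ha, ?_⟩
  simpa using hb

section TemporalTangentCone

variable {n : ℕ} {X : ℝ → Set (EuclideanSpace ℝ (Fin n))} {t L : ℝ}
  {x : EuclideanSpace ℝ (Fin n)}

theorem forwardLipschitzAt.exists_seq_norm_sub_le (hL : 0 ≤ L)
    (hfl : forwardLipschitzAt X t L) (hx : x ∈ X t) :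
    ∃ (δ : ℕ → ℝ) (y : ℕ → EuclideanSpace ℝ (Fin n)), (∀ k, 0 < δ k) ∧
      Tendsto δ atTop (𝓝 0) ∧ (∀ k, y k ∈ X (t + δ k)) ∧ ∀ k, ‖y k - x‖ ≤ δ k * L := by
  obtain ⟨D, hD, hflD⟩ := hfl
  obtain ⟨δ, -, hδ_mem, hδ_lim⟩ := exists_seq_strictAnti_tendsto' hD
  have hnear : ∀ k, ∃ y ∈ X (t + δ k), ‖y - x‖ ≤ δ k * L := fun k =>
    exists_norm_sub_le_of_mem_add_smul_unitClosedBall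
      (mul_nonneg (hδ_mem k).1.le hL) (hflD _ (hδ_mem k).1.le (hδ_mem k).2 hx)
  choose y hy_mem hy_near using hnear
  exact ⟨δ, y, fun k => (hδ_mem k).1, hδ_lim, hy_mem, hy_near⟩

theorem exists_mem_temporalTangentCone_norm_le {δ : ℕ → ℝ}
    {y : ℕ → EuclideanSpace ℝ (Fin n)} (hδ_pos : ∀ k, 0 < δ k)
    (hδ_lim : Tendsto δ atTop (𝓝 0)) (hy_mem : ∀ k, y k ∈ X (t + δ k))
    (hy_near : ∀ k, ‖y k - x‖ ≤ δ k * L) :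
    ∃ v ∈ temporalTangentCone X t x, ‖v‖ ≤ L := by
  have hquot : ∀ k, (δ k)⁻¹ • (y k - x) ∈ closedBall (0 : EuclideanSpace ℝ (Fin n)) L := by
    intro k
    rw [mem_closedBall_zero_iff, norm_smul, norm_inv, Real.norm_of_nonneg (hδ_pos k).le,
      inv_mul_le_iff₀ (hδ_pos k)]
    exact hy_near k
  obtain ⟨v, hv, φ, hφ, hφ_lim⟩ := (isCompact_closedBall _ L).tendsto_subseq hquot
  have hδφ_lim : Tendsto (δ ∘ φ) atTop (𝓝 0) := hδ_lim.comp hφ.tendsto_atTop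
  have hyφ_lim : Tendsto (y ∘ φ) atTop (𝓝 x) := by
    rw [tendsto_iff_norm_sub_tendsto_zero]
    refine squeeze_zero (fun _ => norm_nonneg _) (fun k => hy_near (φ k)) ?_
    simpa using hδφ_lim.mul_const L
  exact ⟨v, ⟨y ∘ φ, δ ∘ φ, fun k => hδ_pos (φ k), hδφ_lim, hyφ_lim, fun k => hy_mem (φ k),
    hφ_lim⟩, mem_closedBall_zero_iff.mp hv⟩

end TemporalTangentCone

theorem temporalTangentCone_nonempty_of_forwardLipschitz_general {n : ℕ}
    (X : ℝ → Set (EuclideanSpace ℝ (Fin n))) (t L : ℝ) (hL : 0 < L)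
    (hfl : forwardLipschitzAt X t L) (x : EuclideanSpace ℝ (Fin n)) (hx : x ∈ X t) :
    (temporalTangentCone X t x).Nonempty ∧
      ∃ v ∈ temporalTangentCone X t x, ‖v‖ ≤ L := by
  obtain ⟨δ, y, hδ_pos, hδ_lim, hy_mem, hy_near⟩ := hfl.exists_seq_norm_sub_le hL.le hx
  obtain ⟨v, hv, hvL⟩ := exists_mem_temporalTangentCone_norm_le hδ_pos hδ_lim hy_mem hy_near
  exact ⟨⟨v, hv⟩, v, hv, hvL⟩

/-- if `X` is non-empty valued and forward Lipschitz at `t` with constant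
`L > 0`, the temporal tangent cone at every `x ∈ X(t)` is non-empty and contains a
vector of norm at most `L`. -/
theorem temporalTangentCone_nonempty_of_forwardLipschitz {n : ℕ}
    (X : ℝ → Set (EuclideanSpace ℝ (Fin n))) (hne : ∀ s, (X s).Nonempty)
    (t L : ℝ) (hL : 0 < L) (hfl : forwardLipschitzAt X t L)
    (x : EuclideanSpace ℝ (Fin n)) (hx : x ∈ X t) :
    (temporalTangentCone X t x).Nonempty ∧
      ∃ v ∈ temporalTangentCone X t x, ‖v‖ ≤ L :=
  temporalTangentCone_nonempty_of_forwardLipschitz_general X t L hL hfl x hx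
end

section
/- Conversely, let X : ℝ ⇉ ℝⁿ, t₀ ∈ ℝ, x ∈ X(t₀). If (v, 1) belongs to the Bouligand tangent cone of the set G := { (x', t) | t ≥ t₀, x' ∈ X(t) } at (x, t₀), witnessed by sequences (x_k, t_k) ∈ G with t_k > t₀ for all k, then v ∈ T^{t₀}_x X. -/
open Filter Topology Metric Set

/-!
Take the time increments `δₖ = tₖ - t₀ > 0` as the new step sizes and keep the space
components `xₖ`. The time component of the Bouligand quotient says `δₖ / dₖ → 1`, so rescaling
the space component `(xₖ - x) / dₖ → v` by `dₖ / δₖ → 1` gives `(xₖ - x) / δₖ → v`.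
-/

theorem Filter.Tendsto.inv_smul_of_inv_mul_tendsto_one {ι 𝕜 E : Type*}
    [NontriviallyNormedField 𝕜] [NormedAddCommGroup E] [NormedSpace 𝕜 E]
    {l : Filter ι} {d s : ι → 𝕜} {y : ι → E} {v : E} (hd : ∀ i, d i ≠ 0)
    (hy : Tendsto (fun i => (d i)⁻¹ • y i) l (𝓝 v))
    (hs : Tendsto (fun i => (d i)⁻¹ * s i) l (𝓝 1)) :
    Tendsto (fun i => (s i)⁻¹ • y i) l (𝓝 v) := by
  have hrescale : ∀ i, ((d i)⁻¹ * s i)⁻¹ • ((d i)⁻¹ • y i) = (s i)⁻¹ • y i := fun i => by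
    rw [smul_smul, mul_inv_rev, inv_inv, mul_inv_cancel_right₀ (hd i)]
  simpa only [hrescale, inv_one, one_smul] using (hs.inv₀ one_ne_zero).smul hy

theorem graph_tangent_mem_temporal_tangent_general {n : ℕ}
    (X : ℝ → Set (EuclideanSpace ℝ (Fin n))) (t₀ : ℝ)
    (x : EuclideanSpace ℝ (Fin n))
    (v : EuclideanSpace ℝ (Fin n))
    (pk : ℕ → EuclideanSpace ℝ (Fin n) × ℝ) (dk : ℕ → ℝ)
    (hG : ∀ k, t₀ ≤ (pk k).2 ∧ (pk k).1 ∈ X (pk k).2)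
    (ht : ∀ k, t₀ < (pk k).2)
    (hd : ∀ k, 0 < dk k)
    (hp : Tendsto pk atTop (𝓝 (x, t₀)))
    (hlim : Tendsto (fun k => (dk k)⁻¹ • (pk k - (x, t₀))) atTop (𝓝 (v, (1 : ℝ)))) :
    v ∈ temporalTangentCone X t₀ x := by
  have hspace : Tendsto (fun k => (dk k)⁻¹ • ((pk k).1 - x)) atTop (𝓝 v) :=
    (continuous_fst.tendsto _).comp hlim
  have htime : Tendsto (fun k => (dk k)⁻¹ * ((pk k).2 - t₀)) atTop (𝓝 1) :=
    (continuous_snd.tendsto _).comp hlim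
  have hδ0 : Tendsto (fun k => (pk k).2 - t₀) atTop (𝓝 0) := by
    simpa using ((continuous_snd.tendsto _).comp hp).sub_const t₀
  refine ⟨fun k => (pk k).1, fun k => (pk k).2 - t₀, fun k => sub_pos.2 (ht k), hδ0,
    (continuous_fst.tendsto _).comp hp, fun k => ?_,
    hspace.inv_smul_of_inv_mul_tendsto_one (fun k => (hd k).ne') htime⟩
  simpa only [add_sub_cancel] using (hG k).2

/-- if `(v,1)` is a Bouligand tangent vector of the graph
`G = {(x', t) | t ≥ t₀, x' ∈ X(t)}` at `(x, t₀)`, witnessed by a sequence with strictly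
increasing time components, then `v ∈ T^{t₀}_x X`. -/
theorem graph_tangent_mem_temporal_tangent {n : ℕ}
    (X : ℝ → Set (EuclideanSpace ℝ (Fin n))) (t₀ : ℝ)
    (x : EuclideanSpace ℝ (Fin n)) (hx : x ∈ X t₀)
    (v : EuclideanSpace ℝ (Fin n))
    (pk : ℕ → EuclideanSpace ℝ (Fin n) × ℝ) (dk : ℕ → ℝ)
    (hG : ∀ k, t₀ ≤ (pk k).2 ∧ (pk k).1 ∈ X (pk k).2)
    (ht : ∀ k, t₀ < (pk k).2)
    (hd : ∀ k, 0 < dk k) (hd0 : Tendsto dk atTop (𝓝 0))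
    (hp : Tendsto pk atTop (𝓝 (x, t₀)))
    (hlim : Tendsto (fun k => (dk k)⁻¹ • (pk k - (x, t₀))) atTop (𝓝 (v, (1 : ℝ)))) :
    v ∈ temporalTangentCone X t₀ x :=
  graph_tangent_mem_temporal_tangent_general X t₀ x v pk dk hG ht hd hp hlim
end

section
/- Let X(t) := { x ∈ ℝⁿ | g(x, t) ≤ 0 } (componentwise) where g : ℝⁿ × ℝ → ℝᵐ is continuously differentiable. Fix t and x ∈ X(t), and let I := { i | g_i(x,t) = 0 } be the active index set. Then every temporal tangent vector v ∈ T^t_x X satisfies ∇_x g_i(x,t)·v + ∂_t g_i(x,t) ≤ 0 for all i ∈ I. -/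
/-!
If `v` is a temporal tangent vector of `X` at `x` and time `t`, then `(v, 1)` is a positive tangent
vector at `(x, t)` of the space-time graph `{(y, s) | g (y, s) ≤ 0}` of `X`. On that set an active
constraint `g_i` attains its maximum `0` at `(x, t)`, so the first-order condition for a maximum on a
set gives `Dg_i(x, t) (v, 1) ≤ 0`.
-/

open Filter Topology Metric Set

theorem mem_posTangentConeAt_graph_of_mem_temporalTangentCone {n : ℕ}
    {X : ℝ → Set (EuclideanSpace ℝ (Fin n))} {t : ℝ} {x v : EuclideanSpace ℝ (Fin n)}
    (hv : v ∈ temporalTangentCone X t x) :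
    (v, (1 : ℝ)) ∈ posTangentConeAt {p | p.1 ∈ X p.2} (x, t) := by
  obtain ⟨xk, δk, hδ_pos, hδ_lim, hxk_lim, hxk_mem, hv_lim⟩ := hv
  refine mem_tangentConeAt_of_seq atTop (fun k => (δk k)⁻¹.toNNReal)
    (fun k => (xk k - x, δk k)) ?_ (.of_forall fun k => by simpa using hxk_mem k) ?_
  · simpa [Prod.mk_zero_zero] using (hxk_lim.sub_const x).prodMk_nhds hδ_lim
  · refine (hv_lim.prodMk_nhds tendsto_const_nhds).congr fun k => ?_
    have hδ_inv : 0 ≤ (δk k)⁻¹ := (inv_pos.2 (hδ_pos k)).le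
    simp [NNReal.smul_def, Real.coe_toNNReal _ hδ_inv, inv_mul_cancel₀ (hδ_pos k).ne']

theorem temporalTangentCone_subset_linearized_general {n m : ℕ}
    (g : EuclideanSpace ℝ (Fin n) × ℝ → Fin m → ℝ) (hg : ContDiff ℝ 1 g)
    (t : ℝ) (x : EuclideanSpace ℝ (Fin n))
    (v : EuclideanSpace ℝ (Fin n))
    (hv : v ∈ temporalTangentCone
      (fun s => {y : EuclideanSpace ℝ (Fin n) | ∀ i, g (y, s) i ≤ 0}) t x) :
    ∀ i : Fin m, g (x, t) i = 0 →
      fderiv ℝ (fun p => g p i) (x, t) (v, (1 : ℝ)) ≤ 0 := by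
  intro i hi
  have hmax : IsLocalMaxOn (fun p => g p i) {p | ∀ j, g p j ≤ 0} (x, t) :=
    IsMaxOn.localize fun p hp => hi ▸ hp i
  have hdiff : DifferentiableAt ℝ (fun p => g p i) (x, t) :=
    differentiableAt_pi.1 (hg.differentiable one_ne_zero _) i
  exact hmax.hasFDerivWithinAt_nonpos hdiff.hasFDerivAt.hasFDerivWithinAt
    (mem_posTangentConeAt_graph_of_mem_temporalTangentCone hv)

/-- every temporal tangent vector of `X(t) = {x | g(x,t) ≤ 0}` satisfies
`∇_x g_i(x,t)·v + ∂_t g_i(x,t) ≤ 0` for all active indices `i`. -/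
theorem temporalTangentCone_subset_linearized {n m : ℕ}
    (g : EuclideanSpace ℝ (Fin n) × ℝ → Fin m → ℝ) (hg : ContDiff ℝ 1 g)
    (t : ℝ) (x : EuclideanSpace ℝ (Fin n))
    (hx : ∀ i, g (x, t) i ≤ 0)
    (v : EuclideanSpace ℝ (Fin n))
    (hv : v ∈ temporalTangentCone
      (fun s => {y : EuclideanSpace ℝ (Fin n) | ∀ i, g (y, s) i ≤ 0}) t x) :
    ∀ i : Fin m, g (x, t) i = 0 →
      fderiv ℝ (fun p => g p i) (x, t) (v, (1 : ℝ)) ≤ 0 :=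
  temporalTangentCone_subset_linearized_general g hg t x v hv
end

section
/- Let X : ℝ ⇉ ℝⁿ be non-empty-valued and forward Lipschitz continuous at every s in an interval [t, t+T] with uniform constant L (i.e., for each s ∈ [t, t+T) there is D_s > 0 with X(s) ⊆ X(s+δ) + δL𝔹 for all δ ∈ [0, D_s)). Assume additionally that the graph of X is closed. Then X(t) ⊆ X(t+T) + T·L·𝔹. -/
/-!
Fix `x ∈ X t` and consider the times `s ∈ [t, t + T]` at which some point of `X s` lies within
`(s - t) L` of `x`. This set contains `t`, is closed because the graph is closed and the relevant
points stay in a compact ball, and the local forward inclusion at any of its points `s < t + T`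
yields a later point. By real induction it contains `t + T`.
-/

open Metric Set Pointwise

section Minkowski

variable {E : Type*}

lemma mem_add_closedBall_zero_iff [SeminormedAddCommGroup E] {S : Set E} {x : E} {r : ℝ} :
    x ∈ S + closedBall 0 r ↔ ∃ y ∈ S, dist x y ≤ r := by
  constructor
  · rintro ⟨y, hy, z, hz, rfl⟩
    exact ⟨y, hy, by simpa [dist_eq_norm] using hz⟩
  · rintro ⟨y, hy, hxy⟩
    exact ⟨y, hy, x - y, by simpa [dist_eq_norm] using hxy, add_sub_cancel y x⟩

lemma mem_add_smul_unitClosedBall_iff [NormedAddCommGroup E] [NormedSpace ℝ E]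
    {S : Set E} {x : E} {r : ℝ} (hr : 0 ≤ r) :
    x ∈ S + r • closedBall (0 : E) 1 ↔ ∃ y ∈ S, dist x y ≤ r := by
  rw [smul_unitClosedBall_of_nonneg hr, mem_add_closedBall_zero_iff]

end Minkowski

section Propagation

variable {E : Type*} [PseudoMetricSpace E]

def IsForwardLipschitzAt (X : ℝ → Set E) (L s : ℝ) : Prop :=
  ∃ D > 0, ∀ δ, 0 ≤ δ → δ < D →
    ∀ y ∈ X s, ∃ z ∈ X (s + δ), dist y z ≤ δ * L

lemma isForwardLipschitzAt_of_subset_add_smul_unitClosedBall {F : Type*}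
    [NormedAddCommGroup F] [NormedSpace ℝ F] {X : ℝ → Set F} {L s : ℝ} (hL : 0 ≤ L)
    (h : ∃ D > 0, ∀ δ, 0 ≤ δ → δ < D →
      X s ⊆ X (s + δ) + (δ * L) • closedBall (0 : F) 1) :
    IsForwardLipschitzAt X L s := by
  obtain ⟨D, hD, hincl⟩ := h
  exact ⟨D, hD, fun δ hδ hδD y hy =>
    (mem_add_smul_unitClosedBall_iff (mul_nonneg hδ hL)).1 (hincl δ hδ hδD hy)⟩

variable {X : ℝ → Set E} {L : ℝ}

lemma isClosed_reachableTimes_inter_Icc [ProperSpace E]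
    (hX : IsClosed {p : E × ℝ | p.1 ∈ X p.2}) (hL : 0 ≤ L) (x : E) (a b : ℝ) :
    IsClosed ({s | ∃ y ∈ X s, dist x y ≤ (s - a) * L} ∩ Icc a b) := by
  have hK : IsCompact ({p : E × ℝ | p.1 ∈ X p.2 ∧ dist x p.1 ≤ (p.2 - a) * L} ∩
      closedBall x ((b - a) * L) ×ˢ Icc a b) :=
    ((isCompact_closedBall _ _).prod isCompact_Icc).inter_left
      (hX.inter (isClosed_le (f := fun p : E × ℝ => dist x p.1) (by fun_prop) (by fun_prop)))
  convert (hK.image continuous_snd).isClosed using 1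
  ext s
  constructor
  · rintro ⟨⟨y, hy, hxy⟩, hs⟩
    have hball : dist y x ≤ (b - a) * L := by
      rw [dist_comm]
      exact hxy.trans (by gcongr; exact hs.2)
    exact ⟨(y, s), ⟨⟨hy, hxy⟩, hball, hs⟩, rfl⟩
  · rintro ⟨⟨y, s⟩, ⟨⟨hy, hxy⟩, -, hs⟩, rfl⟩
    exact ⟨⟨y, hy, hxy⟩, hs⟩

theorem exists_dist_le_of_isForwardLipschitzAt [ProperSpace E]
    (hX : IsClosed {p : E × ℝ | p.1 ∈ X p.2}) (hL : 0 ≤ L) {a b : ℝ} (hab : a ≤ b)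
    (hfl : ∀ s ∈ Ico a b, IsForwardLipschitzAt X L s) {x : E} (hx : x ∈ X a) :
    ∃ z ∈ X b, dist x z ≤ (b - a) * L := by
  refine (isClosed_reachableTimes_inter_Icc hX hL x a b).mem_of_ge_of_forall_exists_gt
    ⟨x, hx, by simp⟩ hab ?_
  rintro s ⟨⟨y, hy, hxy⟩, hsa, hsb⟩
  obtain ⟨D, hD, hstep⟩ := hfl s ⟨hsa, hsb⟩
  set δ := min (D / 2) (b - s)
  have hδ : 0 < δ := lt_min (half_pos hD) (sub_pos.2 hsb)
  have hδD : δ < D := (min_le_left _ _).trans_lt (half_lt_self hD)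
  obtain ⟨z, hz, hyz⟩ := hstep δ hδ.le hδD y hy
  have hδb : s + δ ≤ b := by linarith [min_le_right (D / 2) (b - s)]
  refine ⟨s + δ, ⟨z, hz, ?_⟩, lt_add_of_pos_right s hδ, hδb⟩
  calc dist x z ≤ dist x y + dist y z := dist_triangle _ _ _
    _ ≤ (s - a) * L + δ * L := add_le_add hxy hyz
    _ = (s + δ - a) * L := by ring

end Propagation

theorem forwardLipschitz_propagate_general {n : ℕ}
    (X : ℝ → Set (EuclideanSpace ℝ (Fin n)))
    (t T L : ℝ) (hT : 0 < T) (hL : 0 < L)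
    (hgraph : IsClosed {p : EuclideanSpace ℝ (Fin n) × ℝ | p.1 ∈ X p.2})
    (hfl : ∀ s ∈ Set.Ico t (t + T), ∃ D > 0, ∀ δ, 0 ≤ δ → δ < D →
      X s ⊆ X (s + δ) + (δ * L) • Metric.closedBall (0 : EuclideanSpace ℝ (Fin n)) 1) :
    X t ⊆ X (t + T) + (T * L) • Metric.closedBall (0 : EuclideanSpace ℝ (Fin n)) 1 := by
  intro x hx
  obtain ⟨z, hz, hxz⟩ := exists_dist_le_of_isForwardLipschitzAt hgraph hL.le
    (le_add_of_nonneg_right hT.le)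
    (fun s hs => isForwardLipschitzAt_of_subset_add_smul_unitClosedBall hL.le (hfl s hs)) hx
  rw [add_sub_cancel_left] at hxz
  exact (mem_add_smul_unitClosedBall_iff (by positivity)).2 ⟨z, hz, hxz⟩

/-- the local forward Lipschitz inclusion, holding at every point of an
interval with uniform constant `L`, propagates over the whole interval (given a closed
graph): `X(t) ⊆ X(t+T) + T·L·𝔹`. -/
theorem forwardLipschitz_propagate {n : ℕ}
    (X : ℝ → Set (EuclideanSpace ℝ (Fin n))) (hne : ∀ s, (X s).Nonempty)
    (t T L : ℝ) (hT : 0 < T) (hL : 0 < L)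
    (hgraph : IsClosed {p : EuclideanSpace ℝ (Fin n) × ℝ | p.1 ∈ X p.2})
    (hfl : ∀ s ∈ Set.Ico t (t + T), ∃ D > 0, ∀ δ, 0 ≤ δ → δ < D →
      X s ⊆ X (s + δ) + (δ * L) • Metric.closedBall (0 : EuclideanSpace ℝ (Fin n)) 1) :
    X t ⊆ X (t + T) + (T * L) • Metric.closedBall (0 : EuclideanSpace ℝ (Fin n)) 1 :=
  forwardLipschitz_propagate_general X t T L hT hL hgraph hfl
end
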